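/- arXiv:1412.5666 — 6 statements merged into one kernel-verified Lean document; each statement's English description precedes it below -/
import Mathlib

section
/- (Spreading lemma) Let F : V → ℝ^k be built from k orthonormal eigenvectors as F(u) = (f_1(u),...,f_k(u)) with e_i = D^{1/2} f_i orthonormal. Fix 0 < Δ ≤ 2^{-1/2}. Then for any vertex set S whose diameter under the mirror radial projection distance d_M is less than Δ, the mass satisfies M(S) = Σ_{w∈S} d(w)‖F(w)‖^2 ≤ 1/(1-Δ^2), i.e. M(S) ≤ M(V)/(k(1-Δ^2)). -/
open BigOperators Classical

/-- The mirror radial projection distance: `min(‖F'(u)-F'(v)‖, ‖F'(u)+F'(v)‖)` where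
`F'(u) = F(u)/‖F(u)‖`, and `1` if either point maps to the origin. -/

noncomputable def dM {n k : ℕ} (F : Fin n → EuclideanSpace ℝ (Fin k))
    (u v : Fin n) : ℝ :=
  if F u = 0 ∨ F v = 0 then 1
  else min ‖(‖F u‖⁻¹ • F u) - (‖F v‖⁻¹ • F v)‖ ‖(‖F u‖⁻¹ • F u) + (‖F v‖⁻¹ • F v)‖

/-!
Fix `u₀ ∈ S` and the unit vector `x = F(u₀)/‖F(u₀)‖`. Every `v ∈ S` has its radial projection
within `Δ` of `±x`, so `⟪x, F v⟫² ≥ (1 - Δ²) ‖F v‖²`. On the other hand, since the `e_i` are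
orthonormal, `∑_v d(v) ⟪x, F v⟫² = ∑_v (∑_i x_i e_i(v))² = ‖x‖² = 1`. Summing the first bound
over `S` gives `(1 - Δ²) M(S) ≤ 1`.
-/

section InnerProductSpace

variable {E : Type*} [NormedAddCommGroup E] [InnerProductSpace ℝ E]

open RealInnerProductSpace

theorem one_sub_sq_le_inner_sq_of_min_norm_lt {x y : E} (hx : ‖x‖ = 1) (hy : ‖y‖ = 1) {Δ : ℝ}
    (h : min ‖x - y‖ ‖x + y‖ < Δ) : 1 - Δ ^ 2 ≤ ⟪x, y⟫ ^ 2 := by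
  have hle : |⟪x, y⟫| ≤ 1 := by simpa [hx, hy] using abs_real_inner_le_norm x y
  have hsub : ‖x - y‖ ^ 2 = 2 - 2 * ⟪x, y⟫ := by rw [norm_sub_sq_real, hx, hy]; ring
  have hadd : ‖x + y‖ ^ 2 = 2 + 2 * ⟪x, y⟫ := by rw [norm_add_sq_real, hx, hy]; ring
  obtain ⟨h1, h2⟩ := abs_le.mp hle
  rcases min_lt_iff.mp h with h | h
  · have := pow_lt_pow_left₀ h (norm_nonneg _) two_ne_zero
    nlinarith
  · have := pow_lt_pow_left₀ h (norm_nonneg _) two_ne_zero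
    nlinarith

theorem one_sub_sq_mul_norm_sq_le_inner_sq {x v : E} (hx : ‖x‖ = 1) (hv : v ≠ 0) {Δ : ℝ}
    (h : min ‖x - ‖v‖⁻¹ • v‖ ‖x + ‖v‖⁻¹ • v‖ < Δ) : (1 - Δ ^ 2) * ‖v‖ ^ 2 ≤ ⟪x, v⟫ ^ 2 := by
  have hv' : ‖v‖ ≠ 0 := norm_ne_zero_iff.mpr hv
  have hinner : ⟪x, v⟫ = ‖v‖ * ⟪x, ‖v‖⁻¹ • v⟫ := by
    rw [real_inner_smul_right, ← mul_assoc, mul_inv_cancel₀ hv', one_mul]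
  rw [hinner, mul_pow, mul_comm]
  exact mul_le_mul_of_nonneg_left
    (one_sub_sq_le_inner_sq_of_min_norm_lt hx (norm_smul_inv_norm hv) h) (by positivity)

end InnerProductSpace

theorem sum_sq_sum_mul_eq_sum_sq_of_orthonormal {ι κ : Type*} [Fintype ι] [Fintype κ]
    [DecidableEq ι] {e : ι → κ → ℝ} (horth : ∀ i j, ∑ a, e i a * e j a = if i = j then 1 else 0)
    (x : ι → ℝ) : ∑ a, (∑ i, x i * e i a) ^ 2 = ∑ i, x i ^ 2 :=
  calc ∑ a, (∑ i, x i * e i a) ^ 2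
      = ∑ a, ∑ i, ∑ j, x i * x j * (e i a * e j a) := by
        simp_rw [sq, Finset.sum_mul_sum]
        exact Finset.sum_congr rfl fun a _ => Finset.sum_congr rfl fun i _ =>
          Finset.sum_congr rfl fun j _ => by ring
    _ = ∑ i, ∑ j, x i * x j * ∑ a, e i a * e j a := by
        simp_rw [Finset.mul_sum]
        rw [Finset.sum_comm]
        exact Finset.sum_congr rfl fun i _ => Finset.sum_comm
    _ = ∑ i, x i ^ 2 := by simp [horth, sq]

theorem sum_mul_inner_sq_eq_norm_sq {ι κ : Type*} [Fintype ι] [Fintype κ] [DecidableEq ι]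
    {d : κ → ℝ} (hd : ∀ a, 0 < d a)
    {e : ι → κ → ℝ} (horth : ∀ i j, ∑ a, e i a * e j a = if i = j then 1 else 0)
    {F : κ → EuclideanSpace ℝ ι} (hF : ∀ a i, F a i = e i a / Real.sqrt (d a))
    (x : EuclideanSpace ℝ ι) :
    ∑ a, d a * inner ℝ x (F a) ^ 2 = ‖x‖ ^ 2 := by
  have hterm : ∀ a, d a * inner ℝ x (F a) ^ 2 = (∑ i, x i * e i a) ^ 2 := by
    intro a
    have hsqrt : Real.sqrt (d a) ≠ 0 := (Real.sqrt_pos.mpr (hd a)).ne'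
    have hcoord : ∑ i, x i * e i a = Real.sqrt (d a) * inner ℝ x (F a) := by
      simp only [PiLp.inner_apply, RCLike.inner_apply, conj_trivial, Finset.mul_sum, hF]
      exact Finset.sum_congr rfl fun i _ => by field_simp
    rw [hcoord, mul_pow, Real.sq_sqrt (hd a).le]
  simp only [hterm, sum_sq_sum_mul_eq_sum_sq_of_orthonormal horth, EuclideanSpace.norm_sq_eq,
    Real.norm_eq_abs, sq_abs]

theorem stmt6_general {n k : ℕ}
    (d : Fin n → ℝ) (hdpos : ∀ i, 0 < d i)
    (e : Fin k → Fin n → ℝ)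
    (horth : ∀ i j, (∑ a, e i a * e j a) = if i = j then 1 else 0)
    (f : Fin k → Fin n → ℝ) (hf : ∀ i a, f i a = e i a / Real.sqrt (d a))
    (F : Fin n → EuclideanSpace ℝ (Fin k))
    (hF : ∀ u, F u = (WithLp.equiv 2 (Fin k → ℝ)).symm (fun i => f i u))
    (Δ : ℝ) (hΔ0 : 0 < Δ) (hΔ1 : Δ ≤ (Real.sqrt 2)⁻¹)
    (S : Finset (Fin n)) (hdiam : ∀ u ∈ S, ∀ v ∈ S, dM F u v < Δ) :
    (∑ u ∈ S, d u * ‖F u‖ ^ 2) ≤ 1 / (1 - Δ ^ 2) := by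
  have hΔsq : Δ ^ 2 ≤ 1 / 2 := by
    simpa [inv_pow, Real.sq_sqrt] using pow_le_pow_left₀ hΔ0.le hΔ1 2
  have hpos : 0 < 1 - Δ ^ 2 := by linarith
  rcases S.eq_empty_or_nonempty with rfl | ⟨u₀, hu₀⟩
  · simpa using hpos.le
  have hFne : ∀ u ∈ S, F u ≠ 0 := fun u hu hFu => by
    have hΔ_le_one : Δ ≤ 1 := by nlinarith
    simpa [dM, hFu] using (hdiam u hu u hu).trans_le hΔ_le_one
  set x := ‖F u₀‖⁻¹ • F u₀
  have hx : ‖x‖ = 1 := norm_smul_inv_norm (hFne u₀ hu₀)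
  have hFe : ∀ u i, F u i = e i u / Real.sqrt (d u) := by simp [hF, hf]
  rw [le_div_iff₀ hpos, mul_comm, Finset.mul_sum]
  calc ∑ u ∈ S, (1 - Δ ^ 2) * (d u * ‖F u‖ ^ 2)
      ≤ ∑ u ∈ S, d u * inner ℝ x (F u) ^ 2 := by
        refine Finset.sum_le_sum fun v hv => ?_
        have hclose := hdiam u₀ hu₀ v hv
        rw [dM, if_neg (by simp [hFne u₀ hu₀, hFne v hv])] at hclose
        rw [mul_left_comm]
        exact mul_le_mul_of_nonneg_left
          (one_sub_sq_mul_norm_sq_le_inner_sq hx (hFne v hv) hclose) (hdpos v).le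
    _ ≤ ∑ u, d u * inner ℝ x (F u) ^ 2 :=
        Finset.sum_le_sum_of_subset_of_nonneg (Finset.subset_univ S)
          fun u _ _ => mul_nonneg (hdpos u).le (sq_nonneg _)
    _ = 1 := by rw [sum_mul_inner_sq_eq_norm_sq hdpos horth hFe x, hx, one_pow]

/-- Spreading lemma: if `F` is the spectral embedding built from `k` orthonormal
vectors `e_i = D^{1/2} f_i` and `0 < Δ ≤ 2^{-1/2}`, then any vertex set `S` of
`d_M`-diameter less than `Δ` has mass at most `1/(1-Δ²) = M(V)/(k(1-Δ²))`. -/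
theorem stmt6 {n k : ℕ} (hk : 0 < k) (w : Fin n → Fin n → ℝ)
    (hsym : ∀ i j, w i j = w j i) (hnonneg : ∀ i j, 0 ≤ w i j)
    (d : Fin n → ℝ) (hd : ∀ i, d i = ∑ j, w i j) (hdpos : ∀ i, 0 < d i)
    (e : Fin k → Fin n → ℝ)
    (horth : ∀ i j, (∑ a, e i a * e j a) = if i = j then 1 else 0)
    (f : Fin k → Fin n → ℝ) (hf : ∀ i a, f i a = e i a / Real.sqrt (d a))
    (F : Fin n → EuclideanSpace ℝ (Fin k))
    (hF : ∀ u, F u = (WithLp.equiv 2 (Fin k → ℝ)).symm (fun i => f i u))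
    (Δ : ℝ) (hΔ0 : 0 < Δ) (hΔ1 : Δ ≤ (Real.sqrt 2)⁻¹)
    (S : Finset (Fin n)) (hdiam : ∀ u ∈ S, ∀ v ∈ S, dM F u v < Δ) :
    (∑ u ∈ S, d u * ‖F u‖ ^ 2) ≤ 1 / (1 - Δ ^ 2) :=
  stmt6_general d hdpos e horth f hf F hF Δ hΔ0 hΔ1 S hdiam
end

section
/- Let F : V → ℝ^k with F(u) ≠ 0 for all u in a weighted graph G. Then Σ_{u∈V} Σ_{v∈N(u)} w_{uv} d_M(u,v) ‖F(u)‖^2 ≤ sqrt(8/R̃(F)) · Σ_{uv∈E, u<v} w_{uv} ‖F(u)+F(v)‖^2, where R̃(F) = (Σ_{uv∈E,u<v} w_{uv}‖F(u)+F(v)‖^2)/(Σ_u d(u)‖F(u)‖^2). -/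
open BigOperators Classical

lemma key_aux {k : ℕ} (x y : EuclideanSpace ℝ (Fin k)) (hx : x ≠ 0) (hy : y ≠ 0) :
    min ‖(‖x‖⁻¹ • x) - (‖y‖⁻¹ • y)‖ ‖(‖x‖⁻¹ • x) + (‖y‖⁻¹ • y)‖ * ‖x‖ ≤ 2 * ‖x + y‖ := by
  have hx' : (0:ℝ) < ‖x‖ := norm_pos_iff.mpr hx
  have hy' : (0:ℝ) < ‖y‖ := norm_pos_iff.mpr hy
  have h1 : ‖x‖ • ((‖x‖⁻¹ • x) + (‖y‖⁻¹ • y)) = (x + y) + (‖x‖/‖y‖ - 1) • y := by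
    rw [smul_add, smul_smul, smul_smul, mul_inv_cancel₀ hx'.ne', one_smul, sub_smul, one_smul,
      div_eq_mul_inv]
    abel
  have h2 : ‖x‖ * ‖(‖x‖⁻¹ • x) + (‖y‖⁻¹ • y)‖ ≤ 2 * ‖x + y‖ := by
    have : ‖x‖ * ‖(‖x‖⁻¹ • x) + (‖y‖⁻¹ • y)‖ = ‖‖x‖ • ((‖x‖⁻¹ • x) + (‖y‖⁻¹ • y))‖ := by
      rw [norm_smul, Real.norm_eq_abs, abs_of_pos hx']
    rw [this, h1]
    have h3 : ‖(x + y) + (‖x‖/‖y‖ - 1) • y‖ ≤ ‖x + y‖ + ‖(‖x‖/‖y‖ - 1) • y‖ := norm_add_le _ _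
    have h4 : ‖(‖x‖/‖y‖ - 1) • y‖ = |‖x‖ - ‖y‖| := by
      rw [norm_smul, Real.norm_eq_abs]
      rw [show ‖x‖/‖y‖ - 1 = (‖x‖ - ‖y‖)/‖y‖ by field_simp]
      rw [abs_div, abs_of_pos hy', div_mul_cancel₀ _ hy'.ne']
    have h5 : |‖x‖ - ‖y‖| ≤ ‖x + y‖ := by
      have := abs_norm_sub_norm_le x (-y)
      simpa [sub_neg_eq_add] using this
    calc ‖(x + y) + (‖x‖/‖y‖ - 1) • y‖ ≤ ‖x + y‖ + |‖x‖ - ‖y‖| := by rw [← h4]; exact h3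
      _ ≤ ‖x + y‖ + ‖x + y‖ := by linarith
      _ = 2 * ‖x + y‖ := by ring
  calc min ‖(‖x‖⁻¹ • x) - (‖y‖⁻¹ • y)‖ ‖(‖x‖⁻¹ • x) + (‖y‖⁻¹ • y)‖ * ‖x‖
      ≤ ‖(‖x‖⁻¹ • x) + (‖y‖⁻¹ • y)‖ * ‖x‖ :=
        mul_le_mul_of_nonneg_right (min_le_right _ _) (norm_nonneg x)
    _ ≤ 2 * ‖x + y‖ := by rw [mul_comm]; exact h2

/-- For `F : V → ℝ^k` nowhere zero,
`∑_u ∑_{v∈N(u)} w_{uv} d_M(u,v)‖F(u)‖² ≤ √(8/R̃(F)) ∑_{u<v} w_{uv}‖F(u)+F(v)‖²`,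
where `R̃(F)` is the signless Rayleigh quotient of `F`. -/
theorem stmt9 {n k : ℕ} (w : Fin n → Fin n → ℝ)
    (hsym : ∀ i j, w i j = w j i) (hnonneg : ∀ i j, 0 ≤ w i j)
    (d : Fin n → ℝ) (hd : ∀ i, d i = ∑ j, w i j) (hdpos : ∀ i, 0 < d i)
    (F : Fin n → EuclideanSpace ℝ (Fin k)) (hF : ∀ u, F u ≠ 0)
    (num den : ℝ)
    (hnum : num = ∑ u, ∑ v, if u < v then w u v * ‖F u + F v‖ ^ 2 else 0)
    (hden : den = ∑ u, d u * ‖F u‖ ^ 2)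
    (hnumpos : 0 < num) :
    (∑ u, ∑ v, w u v * dM F u v * ‖F u‖ ^ 2) ≤
      Real.sqrt (8 / (num / den)) * num := by
  have hdennn : 0 ≤ den := by
    rw [hden]
    exact Finset.sum_nonneg fun u _ => mul_nonneg (hdpos u).le (sq_nonneg _)
  -- f and g for Cauchy-Schwarz over pairs
  set f : Fin n × Fin n → ℝ := fun p =>
    if p.1 = p.2 then 0 else Real.sqrt (w p.1 p.2) * ‖F p.1 + F p.2‖ with hf
  set g : Fin n × Fin n → ℝ := fun p => Real.sqrt (w p.1 p.2) * (2 * ‖F p.1‖) with hg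
  have hdM : ∀ u v, dM F u v =
      min ‖(‖F u‖⁻¹ • F u) - (‖F v‖⁻¹ • F v)‖ ‖(‖F u‖⁻¹ • F u) + (‖F v‖⁻¹ • F v)‖ := by
    intro u v
    rw [dM, if_neg (by push_neg; exact ⟨hF u, hF v⟩)]
  -- pointwise bound
  have hpt : ∀ p : Fin n × Fin n,
      w p.1 p.2 * dM F p.1 p.2 * ‖F p.1‖ ^ 2 ≤ f p * g p := by
    intro ⟨u, v⟩
    simp only [hf, hg]
    by_cases huv : u = v
    · subst huv
      simp only [if_pos rfl, zero_mul]
      have : dM F u u = 0 := by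
        rw [hdM u u, sub_self, norm_zero]
        exact min_eq_left (norm_nonneg _)
      rw [this]
      simp
    · rw [if_neg huv]
      have hkey : dM F u v * ‖F u‖ ≤ 2 * ‖F u + F v‖ := by
        rw [hdM u v]; exact key_aux (F u) (F v) (hF u) (hF v)
      have hw := hnonneg u v
      have hsq : Real.sqrt (w u v) * Real.sqrt (w u v) = w u v := Real.mul_self_sqrt hw
      calc w u v * dM F u v * ‖F u‖ ^ 2 = w u v * ((dM F u v * ‖F u‖) * ‖F u‖) := by ring
        _ ≤ w u v * ((2 * ‖F u + F v‖) * ‖F u‖) := by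
            apply mul_le_mul_of_nonneg_left _ hw
            exact mul_le_mul_of_nonneg_right hkey (norm_nonneg _)
        _ = Real.sqrt (w u v) * ‖F u + F v‖ * (Real.sqrt (w u v) * (2 * ‖F u‖)) := by
            linear_combination (2 * ‖F u + F v‖ * ‖F u‖) * hsq.symm
  -- sum of f^2
  have hfsq : ∑ p : Fin n × Fin n, f p ^ 2 = 2 * num := by
    have : ∀ p : Fin n × Fin n, f p ^ 2 =
        (if p.1 < p.2 then w p.1 p.2 * ‖F p.1 + F p.2‖ ^ 2 else 0) +
        (if p.2 < p.1 then w p.1 p.2 * ‖F p.1 + F p.2‖ ^ 2 else 0) := by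
      intro ⟨u, v⟩
      simp only [hf]
      rcases lt_trichotomy u v with h | h | h
      · rw [if_neg h.ne, if_pos h, if_neg (asymm h), mul_pow, Real.sq_sqrt (hnonneg u v)]
        ring
      · simp [h]
      · rw [if_neg h.ne', if_neg (asymm h), if_pos h, mul_pow, Real.sq_sqrt (hnonneg u v)]
        ring
    rw [Finset.sum_congr rfl fun p _ => this p, Finset.sum_add_distrib]
    have e1 : ∑ p : Fin n × Fin n,
        (if p.1 < p.2 then w p.1 p.2 * ‖F p.1 + F p.2‖ ^ 2 else 0) = num := by
      rw [hnum, Fintype.sum_prod_type]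
    have e2 : ∑ p : Fin n × Fin n,
        (if p.2 < p.1 then w p.1 p.2 * ‖F p.1 + F p.2‖ ^ 2 else 0) = num := by
      rw [hnum, Fintype.sum_prod_type, Finset.sum_comm]
      refine Finset.sum_congr rfl fun v _ => Finset.sum_congr rfl fun u _ => ?_
      rw [hsym u v, add_comm (F u) (F v)]
    rw [e1, e2]; ring
  -- sum of g^2
  have hgsq : ∑ p : Fin n × Fin n, g p ^ 2 = 4 * den := by
    have : ∀ p : Fin n × Fin n, g p ^ 2 = w p.1 p.2 * (4 * ‖F p.1‖ ^ 2) := by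
      intro ⟨u, v⟩
      simp only [hg]
      rw [mul_pow, Real.sq_sqrt (hnonneg u v)]
      ring
    rw [Finset.sum_congr rfl fun p _ => this p, Fintype.sum_prod_type, hden]
    rw [Finset.mul_sum]
    refine Finset.sum_congr rfl fun u _ => ?_
    show ∑ y, w u y * (4 * ‖F u‖ ^ 2) = 4 * (d u * ‖F u‖ ^ 2)
    rw [← Finset.sum_mul, ← hd u]
    ring
  -- Cauchy-Schwarz
  have hCS : ∑ p : Fin n × Fin n, f p * g p ≤
      Real.sqrt (∑ p : Fin n × Fin n, f p ^ 2) * Real.sqrt (∑ p : Fin n × Fin n, g p ^ 2) :=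
    Real.sum_mul_le_sqrt_mul_sqrt _ _ _
  have hmain : (∑ u, ∑ v, w u v * dM F u v * ‖F u‖ ^ 2) ≤
      Real.sqrt (2 * num) * Real.sqrt (4 * den) := by
    calc (∑ u, ∑ v, w u v * dM F u v * ‖F u‖ ^ 2)
        = ∑ p : Fin n × Fin n, w p.1 p.2 * dM F p.1 p.2 * ‖F p.1‖ ^ 2 := by
          rw [Fintype.sum_prod_type]
      _ ≤ ∑ p : Fin n × Fin n, f p * g p := Finset.sum_le_sum fun p _ => hpt p
      _ ≤ _ := by rw [← hfsq, ← hgsq]; exact hCS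
  have hrhs : Real.sqrt (2 * num) * Real.sqrt (4 * den) =
      Real.sqrt (8 / (num / den)) * num := by
    have h8 : (8:ℝ) / (num / den) = 8 * den / num := by
      rw [div_eq_mul_inv, inv_div, mul_div_assoc]
    calc Real.sqrt (2 * num) * Real.sqrt (4 * den)
        = Real.sqrt (2 * num * (4 * den)) := (Real.sqrt_mul (by linarith) _).symm
      _ = Real.sqrt (8 * den / num * num ^ 2) := by
          congr 1; field_simp; ring
      _ = Real.sqrt (8 * den / num) * Real.sqrt (num ^ 2) :=
          Real.sqrt_mul (div_nonneg (by linarith) hnumpos.le) _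
      _ = Real.sqrt (8 / (num / den)) * num := by
          rw [← h8, Real.sqrt_sq hnumpos.le]
  linarith [hmain, hrhs.ge, hrhs.le]
end

section
/- If λ'_n is the largest eigenvalue of the combinatorial Laplacian L' = D - A of a weighted graph G on n vertices, then for any vertex set S the weight of the edge cut satisfies ‖B(S)‖ ≤ λ'_n · |S|(n-|S|)/n. In particular MAX-CUT(G) ≤ λ'_n n / 4. -/
/-!
The Laplacian quadratic form is `x ⬝ᵥ L x = ½ ∑ᵢⱼ wᵢⱼ (xᵢ - xⱼ)²`. For the centred indicator
`x = 1_S - |S|/n` it equals the cut weight `‖B(S)‖`, while `x ⬝ᵥ x = |S|(n - |S|)/n`, so the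
Rayleigh bound `x ⬝ᵥ L x ≤ λ'ₙ (x ⬝ᵥ x)` gives the first inequality. Since `L` is positive
semidefinite, `λ'ₙ ≥ 0`, and `|S|(n - |S|) ≤ n²/4` gives the second.
-/

open Matrix BigOperators
open Unitary
open scoped ComplexOrder

theorem Matrix.IsHermitian.posSemidef_smul_one_sub {𝕜 ι : Type*} [RCLike 𝕜] [Fintype ι]
    [DecidableEq ι] {A : Matrix ι ι 𝕜} (hA : A.IsHermitian) {μ : ℝ}
    (hμ : ∀ i, hA.eigenvalues i ≤ μ) : ((μ : 𝕜) • 1 - A).PosSemidef := by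
  have hconj : (μ : 𝕜) • 1 - A = conjStarAlgAut 𝕜 _ hA.eigenvectorUnitary
      (diagonal fun i => ((μ - hA.eigenvalues i : ℝ) : 𝕜)) := by
    conv_lhs => rw [hA.spectral_theorem]
    rw [← map_one (conjStarAlgAut 𝕜 _ hA.eigenvectorUnitary), ← map_smul, ← map_sub,
      ← diagonal_one, ← diagonal_smul, diagonal_sub]
    simp
  rw [hconj, conjStarAlgAut_apply, star_eq_conjTranspose]
  exact (PosSemidef.diagonal fun i => by simpa using hμ i).mul_mul_conjTranspose_same _

theorem Matrix.IsHermitian.dotProduct_mulVec_le {ι : Type*} [Fintype ι] [DecidableEq ι]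
    {A : Matrix ι ι ℝ} (hA : A.IsHermitian) {μ : ℝ} (hμ : ∀ i, hA.eigenvalues i ≤ μ)
    (x : ι → ℝ) : x ⬝ᵥ (A *ᵥ x) ≤ μ * (x ⬝ᵥ x) := by
  simpa [sub_mulVec, smul_mulVec, dotProduct_sub] using
    (hA.posSemidef_smul_one_sub hμ).dotProduct_mulVec_nonneg x

section WeightedLaplacian

variable {ι : Type*} [Fintype ι] [DecidableEq ι] (w : ι → ι → ℝ)

def weightedLaplacian : Matrix ι ι ℝ :=
  diagonal (fun i => ∑ j, w i j) - of w

def edgeCut (S : Finset ι) : ℝ :=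
  ∑ i ∈ S, ∑ j ∈ Sᶜ, w i j

variable {w}

theorem dotProduct_weightedLaplacian_mulVec (hsym : ∀ i j, w i j = w j i) (x : ι → ℝ) :
    x ⬝ᵥ (weightedLaplacian w *ᵥ x) = (∑ i, ∑ j, w i j * (x i - x j) ^ 2) / 2 := by
  have hrow : x ⬝ᵥ (weightedLaplacian w *ᵥ x) = ∑ i, ∑ j, w i j * (x i * (x i - x j)) := by
    rw [weightedLaplacian, sub_mulVec, dotProduct_sub]
    unfold dotProduct
    simp only [mulVec_diagonal]
    simp only [mulVec, dotProduct, of_apply, Finset.mul_sum, Finset.sum_mul,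
      ← Finset.sum_sub_distrib]
    exact Finset.sum_congr rfl fun i _ => Finset.sum_congr rfl fun j _ => by ring
  have hswap : ∑ i, ∑ j, w i j * (x i * (x i - x j)) = ∑ i, ∑ j, w i j * (x j * (x j - x i)) := by
    rw [Finset.sum_comm]
    simp_rw [hsym]
  rw [hrow, eq_div_iff two_ne_zero, mul_two]
  nth_rw 2 [hswap]
  simp only [← Finset.sum_add_distrib]
  exact Finset.sum_congr rfl fun i _ => Finset.sum_congr rfl fun j _ => by ring

theorem posSemidef_weightedLaplacian (hsym : ∀ i j, w i j = w j i) (hnonneg : ∀ i j, 0 ≤ w i j) :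
    (weightedLaplacian w).PosSemidef := by
  refine .of_dotProduct_mulVec_nonneg ((isHermitian_diagonal _).sub ?_) fun x => ?_
  · ext i j
    exact hsym j i
  · rw [star_trivial, dotProduct_weightedLaplacian_mulVec hsym]
    have := fun i j => mul_nonneg (hnonneg i j) (sq_nonneg (x i - x j))
    exact div_nonneg (Finset.sum_nonneg fun i _ => Finset.sum_nonneg fun j _ => this i j)
      zero_le_two

theorem edgeCut_eq_sum_sum_ite (S : Finset ι) :
    edgeCut w S = ∑ i, ∑ j, if i ∈ S ∧ j ∉ S then w i j else 0 := by
  simp only [edgeCut, ite_and, Finset.sum_ite_irrel, Finset.sum_const_zero, Finset.sum_ite_mem_eq,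
    ← Finset.mem_compl]

theorem sum_sum_mul_sq_indicator_sub (hsym : ∀ i j, w i j = w j i) (S : Finset ι) :
    ∑ i, ∑ j, w i j * ((if i ∈ S then 1 else 0) - (if j ∈ S then 1 else 0)) ^ 2
      = 2 * edgeCut w S := by
  have hsplit : ∀ i j, w i j * ((if i ∈ S then 1 else 0) - (if j ∈ S then 1 else 0)) ^ 2
      = (if i ∈ S ∧ j ∉ S then w i j else 0) + (if j ∈ S ∧ i ∉ S then w j i else 0) := by
    intro i j
    rw [hsym j i]
    split_ifs <;> simp_all
  simp only [hsplit, Finset.sum_add_distrib, edgeCut_eq_sum_sum_ite]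
  rw [Finset.sum_comm (f := fun i j => if j ∈ S ∧ i ∉ S then w j i else 0), two_mul]

theorem sum_sq_indicator_sub_density [Nonempty ι] (S : Finset ι) :
    ∑ i, ((if i ∈ S then 1 else 0) - (S.card : ℝ) / Fintype.card ι) ^ 2
      = (S.card : ℝ) * ((Fintype.card ι : ℝ) - S.card) / Fintype.card ι := by
  set c : ℝ := S.card / Fintype.card ι with hc
  have hcard : (Fintype.card ι : ℝ) ≠ 0 := by positivity
  rw [← Finset.sum_add_sum_compl S,
    Finset.sum_congr (s₁ := S) rfl (g := fun _ => (1 - c) ^ 2) fun i hi => by simp [hi],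
    Finset.sum_congr (s₁ := Sᶜ) rfl (g := fun _ => c ^ 2) fun i hi => by
      simp [Finset.mem_compl.mp hi]]
  simp only [Finset.sum_const, nsmul_eq_mul, Finset.card_compl, Nat.cast_sub S.card_le_univ, hc]
  field_simp
  ring

theorem edgeCut_le_mul_card_mul_card_compl_div [Nonempty ι] (hsym : ∀ i j, w i j = w j i)
    (hH : (weightedLaplacian w).IsHermitian) {μ : ℝ} (hμ : ∀ i, hH.eigenvalues i ≤ μ)
    (S : Finset ι) :
    edgeCut w S ≤ μ * ((S.card : ℝ) * ((Fintype.card ι : ℝ) - S.card)) / Fintype.card ι := by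
  set x : ι → ℝ := fun i => (if i ∈ S then 1 else 0) - (S.card : ℝ) / Fintype.card ι
  have hcut : x ⬝ᵥ (weightedLaplacian w *ᵥ x) = edgeCut w S := by
    rw [dotProduct_weightedLaplacian_mulVec hsym, div_eq_iff two_ne_zero, mul_comm,
      ← sum_sum_mul_sq_indicator_sub hsym]
    simp only [x, sub_sub_sub_cancel_right]
  have hnorm : x ⬝ᵥ x = (S.card : ℝ) * ((Fintype.card ι : ℝ) - S.card) / Fintype.card ι := by
    simp only [← sum_sq_indicator_sub_density S, dotProduct, x, sq]
  rw [← hcut, mul_div_assoc, ← hnorm]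
  exact hH.dotProduct_mulVec_le hμ x

end WeightedLaplacian

theorem stmt10_general {n : ℕ} (hn : 0 < n) (w : Fin n → Fin n → ℝ)
    (hsym : ∀ i j, w i j = w j i) (hnonneg : ∀ i j, 0 ≤ w i j)
    (d : Fin n → ℝ) (hd : ∀ i, d i = ∑ j, w i j)
    (L' : Matrix (Fin n) (Fin n) ℝ)
    (hL' : L' = Matrix.of (fun i j => (if i = j then d i else 0) - w i j))
    (hH : L'.IsHermitian) (μ : ℝ)
    (hμmax : ∀ i, hH.eigenvalues i ≤ μ) :
    ∀ S : Finset (Fin n),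
      (∑ i ∈ S, ∑ j ∈ Sᶜ, w i j) ≤ μ * ((S.card : ℝ) * ((n : ℝ) - S.card)) / n ∧
      (∑ i ∈ S, ∑ j ∈ Sᶜ, w i j) ≤ μ * n / 4 := by
  intro S
  have hL : L' = weightedLaplacian w := by
    ext i j
    simp [hL', weightedLaplacian, diagonal_apply, hd]
  subst hL
  have : Nonempty (Fin n) := Fin.pos_iff_nonempty.mp hn
  have hμ : 0 ≤ μ :=
    ((posSemidef_weightedLaplacian hsym hnonneg).eigenvalues_nonneg ⟨0, hn⟩).trans (hμmax _)
  have hcut := edgeCut_le_mul_card_mul_card_compl_div hsym hH hμmax S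
  rw [Fintype.card_fin] at hcut
  refine ⟨hcut, hcut.trans ?_⟩
  have hamgm := four_mul_le_sq_add (S.card : ℝ) (n - S.card)
  rw [div_le_div_iff₀ (by exact_mod_cast hn) four_pos]
  nlinarith

/-- If `μ` is the largest eigenvalue of the combinatorial Laplacian `L' = D - A`,
then for every vertex set `S`, `‖B(S)‖ ≤ μ·|S|(n-|S|)/n`; in particular
`MAX-CUT(G) ≤ μ·n/4`. -/
theorem stmt10 {n : ℕ} (hn : 0 < n) (w : Fin n → Fin n → ℝ)
    (hsym : ∀ i j, w i j = w j i) (hnonneg : ∀ i j, 0 ≤ w i j)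
    (d : Fin n → ℝ) (hd : ∀ i, d i = ∑ j, w i j)
    (L' : Matrix (Fin n) (Fin n) ℝ)
    (hL' : L' = Matrix.of (fun i j => (if i = j then d i else 0) - w i j))
    (hH : L'.IsHermitian) (μ : ℝ)
    (hμmem : ∃ i, hH.eigenvalues i = μ) (hμmax : ∀ i, hH.eigenvalues i ≤ μ) :
    ∀ S : Finset (Fin n),
      (∑ i ∈ S, ∑ j ∈ Sᶜ, w i j) ≤ μ * ((S.card : ℝ) * ((n : ℝ) - S.card)) / n ∧
      (∑ i ∈ S, ∑ j ∈ Sᶜ, w i j) ≤ μ * n / 4 :=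
  stmt10_general hn w hsym hnonneg d hd L' hL' hH μ hμmax
end

section
/- Let λ_n be the largest eigenvalue of the normalized Laplacian of a weighted graph G whose total edge weight is e (so Σ_u d(u) = 2e). Then MAX-CUT(G) ≤ e·λ_n/2. -/
/-!
Put `x = ±1` according to the side of the cut and `y = D^{1/2} x`. Then
`yᵀ L y = ½ ∑ᵢⱼ wᵢⱼ (xᵢ - xⱼ)² = 4 · cut(S)`, while `yᵀ y = ∑ᵢ dᵢ = 2e`. Since every eigenvalue of the
symmetric matrix `L` is at most `λₙ`, the Rayleigh quotient `yᵀ L y / yᵀ y` is at most `μ = λₙ`.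
-/

open Matrix

theorem Matrix.IsHermitian.dotProduct_mulVec_le_of_eigenvalues_le {ι : Type*} [Fintype ι]
    [DecidableEq ι] {A : Matrix ι ι ℝ} (hA : A.IsHermitian) {μ : ℝ}
    (hμ : ∀ i, hA.eigenvalues i ≤ μ) (y : ι → ℝ) :
    y ⬝ᵥ A *ᵥ y ≤ μ * (y ⬝ᵥ y) := by
  open scoped MatrixOrder in
  have hle : A ≤ algebraMap ℝ _ μ := le_algebraMap_of_spectrum_le (fun x hx => by
    obtain ⟨i, rfl⟩ := hA.spectrum_real_eq_range_eigenvalues ▸ hx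
    exact hμ i) hA.isSelfAdjoint
  have hpsd : (μ • (1 : Matrix ι ι ℝ) - A).PosSemidef := by
    rwa [Algebra.algebraMap_eq_smul_one] at hle
  have hform := hpsd.dotProduct_mulVec_nonneg y
  rw [star_trivial, sub_mulVec, dotProduct_sub, smul_mulVec, one_mulVec, dotProduct_smul,
    smul_eq_mul] at hform
  linarith

def cutSign {ι : Type*} [DecidableEq ι] (S : Finset ι) (i : ι) : ℝ :=
  if i ∈ S then 1 else -1

theorem cutSign_sq {ι : Type*} [DecidableEq ι] (S : Finset ι) (i : ι) : cutSign S i ^ 2 = 1 := by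
  unfold cutSign
  split_ifs <;> norm_num

section WeightedGraph

variable {ι : Type*} [Fintype ι]

theorem sum_mul_sub_sq_eq_two_mul {w : ι → ι → ℝ} (hsym : ∀ i j, w i j = w j i) (x : ι → ℝ) :
    ∑ i, ∑ j, w i j * (x i - x j) ^ 2 =
      2 * (∑ i, (∑ j, w i j) * x i ^ 2 - ∑ i, ∑ j, w i j * x i * x j) := by
  have hswap : ∑ i, ∑ j, w i j * x j ^ 2 = ∑ i, ∑ j, w i j * x i ^ 2 := by
    rw [Finset.sum_comm]
    simp_rw [hsym]
  have hexpand : ∀ i j, w i j * (x i - x j) ^ 2 =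
      w i j * x i ^ 2 + w i j * x j ^ 2 - 2 * (w i j * x i * x j) := fun i j => by ring
  simp_rw [hexpand, Finset.sum_sub_distrib, Finset.sum_add_distrib, ← Finset.mul_sum, hswap,
    Finset.sum_mul]
  ring

theorem sqrt_mul_dotProduct_sqrt_mul {d : ι → ℝ} (hd : ∀ i, 0 ≤ d i) (x : ι → ℝ) :
    (fun i => √(d i) * x i) ⬝ᵥ (fun i => √(d i) * x i) = ∑ i, d i * x i ^ 2 := by
  refine Finset.sum_congr rfl fun i _ => ?_
  rw [mul_mul_mul_comm, Real.mul_self_sqrt (hd i), sq]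

theorem sqrt_mul_dotProduct_normalizedAdjacency_mulVec {w : ι → ι → ℝ} {d : ι → ℝ}
    (hd : ∀ i, 0 < d i) (x : ι → ℝ) :
    (fun i => √(d i) * x i) ⬝ᵥ of (fun i j => w i j / (√(d i) * √(d j))) *ᵥ
        (fun i => √(d i) * x i) = ∑ i, ∑ j, w i j * x i * x j := by
  simp only [dotProduct, mulVec, of_apply, Finset.mul_sum]
  refine Finset.sum_congr rfl fun i _ => Finset.sum_congr rfl fun j _ => ?_
  have hi := (Real.sqrt_pos.2 (hd i)).ne'
  have hj := (Real.sqrt_pos.2 (hd j)).ne'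
  field_simp

theorem sqrt_mul_dotProduct_normalizedLaplacian_mulVec [DecidableEq ι] {w : ι → ι → ℝ}
    (hsym : ∀ i j, w i j = w j i) {d : ι → ℝ} (hd : ∀ i, d i = ∑ j, w i j)
    (hdpos : ∀ i, 0 < d i) (x : ι → ℝ) :
    (fun i => √(d i) * x i) ⬝ᵥ (1 - of (fun i j => w i j / (√(d i) * √(d j)))) *ᵥ
        (fun i => √(d i) * x i) = (∑ i, ∑ j, w i j * (x i - x j) ^ 2) / 2 := by
  rw [sub_mulVec, one_mulVec, dotProduct_sub, sqrt_mul_dotProduct_sqrt_mul (fun i => (hdpos i).le),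
    sqrt_mul_dotProduct_normalizedAdjacency_mulVec hdpos, sum_mul_sub_sq_eq_two_mul hsym]
  simp_rw [hd]
  ring

variable [DecidableEq ι]

def cutWeight (w : ι → ι → ℝ) (S : Finset ι) : ℝ :=
  ∑ i ∈ S, ∑ j ∈ Sᶜ, w i j

theorem cutWeight_compl {w : ι → ι → ℝ} (hsym : ∀ i j, w i j = w j i) (S : Finset ι) :
    cutWeight w Sᶜ = cutWeight w S := by
  rw [cutWeight, cutWeight, compl_compl, Finset.sum_comm]
  simp_rw [hsym]

theorem sum_mul_sub_cutSign_sq {w : ι → ι → ℝ} (hsym : ∀ i j, w i j = w j i) (S : Finset ι) :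
    ∑ i, ∑ j, w i j * (cutSign S i - cutSign S j) ^ 2 = 8 * cutWeight w S := by
  have hside : ∀ T : Finset ι, ∀ i ∈ T,
      ∑ j, w i j * (cutSign T i - cutSign T j) ^ 2 = 4 * ∑ j ∈ Tᶜ, w i j := by
    intro T i hi
    rw [← Finset.sum_add_sum_compl T, Finset.mul_sum]
    have hin : ∑ j ∈ T, w i j * (cutSign T i - cutSign T j) ^ 2 = 0 :=
      Finset.sum_eq_zero fun j hj => by simp [cutSign, hi, hj]
    rw [hin, zero_add]
    refine Finset.sum_congr rfl fun j hj => ?_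
    simp only [cutSign, hi, Finset.mem_compl.1 hj, if_true, if_false]
    ring
  have hsignCompl : ∀ i, cutSign Sᶜ i = -cutSign S i := fun i => by
    by_cases hi : i ∈ S <;> simp [cutSign, hi]
  rw [← Finset.sum_add_sum_compl S, Finset.sum_congr rfl (hside S)]
  have hout : ∑ i ∈ Sᶜ, ∑ j, w i j * (cutSign S i - cutSign S j) ^ 2 = 4 * cutWeight w Sᶜ := by
    rw [cutWeight, Finset.mul_sum]
    refine Finset.sum_congr rfl fun i hi => ?_
    rw [← hside Sᶜ i hi]
    refine Finset.sum_congr rfl fun j _ => ?_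
    rw [hsignCompl, hsignCompl]
    ring
  rw [hout, cutWeight_compl hsym, cutWeight, ← Finset.mul_sum]
  ring

end WeightedGraph

theorem stmt11_general {n : ℕ} (w : Fin n → Fin n → ℝ)
    (hsym : ∀ i j, w i j = w j i)
    (d : Fin n → ℝ) (hd : ∀ i, d i = ∑ j, w i j) (hdpos : ∀ i, 0 < d i)
    (L : Matrix (Fin n) (Fin n) ℝ)
    (hL : L = 1 - Matrix.of (fun i j => w i j / (Real.sqrt (d i) * Real.sqrt (d j))))
    (hH : L.IsHermitian) (μ : ℝ)
    (hμmax : ∀ i, hH.eigenvalues i ≤ μ)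
    (eTot : ℝ) (heTot : 2 * eTot = ∑ u, d u) :
    ∀ S : Finset (Fin n), (∑ i ∈ S, ∑ j ∈ Sᶜ, w i j) ≤ eTot * μ / 2 := by
  intro S
  set y : Fin n → ℝ := fun i => √(d i) * cutSign S i
  have hquad : y ⬝ᵥ L *ᵥ y = 4 * cutWeight w S := by
    rw [hL, sqrt_mul_dotProduct_normalizedLaplacian_mulVec hsym hd hdpos,
      sum_mul_sub_cutSign_sq hsym]
    ring
  have hnorm : y ⬝ᵥ y = 2 * eTot := by
    simp only [y, sqrt_mul_dotProduct_sqrt_mul (fun i => (hdpos i).le), cutSign_sq, mul_one,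
      heTot]
  have hrayleigh := hH.dotProduct_mulVec_le_of_eigenvalues_le hμmax y
  rw [hquad, hnorm] at hrayleigh
  change cutWeight w S ≤ _
  linarith

/-- If `μ` is the largest eigenvalue of the normalized Laplacian of `G` and the
total edge weight is `e` (so `∑ d(u) = 2e`), then `MAX-CUT(G) ≤ e·μ/2`. -/
theorem stmt11 {n : ℕ} (w : Fin n → Fin n → ℝ)
    (hsym : ∀ i j, w i j = w j i) (hnonneg : ∀ i j, 0 ≤ w i j)
    (d : Fin n → ℝ) (hd : ∀ i, d i = ∑ j, w i j) (hdpos : ∀ i, 0 < d i)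
    (L : Matrix (Fin n) (Fin n) ℝ)
    (hL : L = 1 - Matrix.of (fun i j => w i j / (Real.sqrt (d i) * Real.sqrt (d j))))
    (hH : L.IsHermitian) (μ : ℝ)
    (hμmem : ∃ i, hH.eigenvalues i = μ) (hμmax : ∀ i, hH.eigenvalues i ≤ μ)
    (eTot : ℝ) (heTot : 2 * eTot = ∑ u, d u) :
    ∀ S : Finset (Fin n), (∑ i ∈ S, ∑ j ∈ Sᶜ, w i j) ≤ eTot * μ / 2 :=
  stmt11_general w hsym d hd hdpos L hL hH μ hμmax eTot heTot
end

section
/- (Hypercontractivity consequence) For any f : {0,1}^k → ℝ and 0 ≤ η ≤ 1, Σ_{S⊆[k]} f̂(S)^2 η^{2|S|} ≤ ‖f‖_{1+η²}², where f̂(S) are the Fourier coefficients with respect to the Walsh basis and ‖f‖_p = (2^{-k} Σ_x |f(x)|^p)^{1/p}. In particular, for the indicator 1_T of a set T of density δ = |T|/2^k, Σ_S 1̂_T(S)^2 η^{2|S|} ≤ δ^{2/(1+η²)}. -/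
open BigOperators Classical

/-- The Walsh function `W_S(x) = (-1)^{∑_{i∈S} x_i}` on `{0,1}^k`. -/
def Walsh {k : ℕ} (S : Finset (Fin k)) (x : Fin k → Bool) : ℝ :=
  ∏ i ∈ S, (if x i then (-1 : ℝ) else 1)

/-!
The proof is the standard induction on the dimension. Splitting `f` along the first coordinate
as `f(0,x) = g(x) + h(x)`, `f(1,x) = g(x) - h(x)`, the noise-weighted Fourier energy of `f` is
that of `g` plus that of `η h`. After the induction hypothesis it remains to bound
`‖g‖_p² + ‖η h‖_p²` with `p = 1 + η²`: Minkowski's inequality in `ℓ^{2/p}` bounds it by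
`‖(g² + η² h²)^{1/2}‖_p²`, and the two-point inequality
`a² + (p - 1) b² ≤ ((|a + b|^p + |a - b|^p) / 2)^{2/p}`, applied pointwise, bounds that by
`‖f‖_p²`.
-/

open Finset

theorem monotoneOn_Icc_of_hasDerivAt_nonneg {a b : ℝ} {f f' : ℝ → ℝ}
    (hf : ContinuousOn f (Set.Icc a b)) (hf' : ∀ x ∈ Set.Ioo a b, HasDerivAt f (f' x) x)
    (hnonneg : ∀ x ∈ Set.Ioo a b, 0 ≤ f' x) : MonotoneOn f (Set.Icc a b) :=
  monotoneOn_of_hasDerivWithinAt_nonneg (convex_Icc a b) hf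
    (fun x hx => (hf' x (by rwa [interior_Icc] at hx)).hasDerivWithinAt)
    (fun x hx => hnonneg x (by rwa [interior_Icc] at hx))

theorem two_mul_mul_le_one_add_rpow_sub_one_sub_rpow {q t : ℝ} (hq0 : 0 ≤ q) (hq1 : q ≤ 1)
    (ht0 : 0 ≤ t) (ht1 : t ≤ 1) : 2 * q * t ≤ (1 + t) ^ q - (1 - t) ^ q := by
  let f : ℝ → ℝ := fun t => (1 + t) ^ q - (1 - t) ^ q - 2 * q * t
  have hderiv : ∀ x ∈ Set.Ioo (0 : ℝ) 1,
      HasDerivAt f (q * ((1 + x) ^ (q - 1) + (1 - x) ^ (q - 1) - 2)) x := by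
    intro x ⟨hx0, hx1⟩
    have h1 := ((hasDerivAt_id x).const_add 1).rpow_const (p := q) (Or.inl (by simp; linarith))
    have h2 := ((hasDerivAt_id x).const_sub 1).rpow_const (p := q) (Or.inl (by simp; linarith))
    refine ((h1.sub h2).sub ((hasDerivAt_id x).const_mul (2 * q))).congr_deriv ?_
    simp only [id]; ring
  have hderiv_nonneg : ∀ x ∈ Set.Ioo (0 : ℝ) 1,
      0 ≤ q * ((1 + x) ^ (q - 1) + (1 - x) ^ (q - 1) - 2) := by
    intro x ⟨hx0, hx1⟩
    have hprod : 1 ≤ (1 + x) ^ (q - 1) * (1 - x) ^ (q - 1) := by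
      rw [← Real.mul_rpow (by linarith) (by linarith)]
      exact Real.one_le_rpow_of_pos_of_le_one_of_nonpos (by nlinarith) (by nlinarith) (by linarith)
    have hu := Real.rpow_pos_of_pos (by linarith : (0 : ℝ) < 1 + x) (q - 1)
    have hv := Real.rpow_pos_of_pos (by linarith : (0 : ℝ) < 1 - x) (q - 1)
    have : 2 ≤ (1 + x) ^ (q - 1) + (1 - x) ^ (q - 1) := by
      nlinarith [sq_nonneg ((1 + x) ^ (q - 1) - (1 - x) ^ (q - 1))]
    exact mul_nonneg hq0 (by linarith)
  have hmono := monotoneOn_Icc_of_hasDerivAt_nonneg (f := f)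
    (by fun_prop (disch := assumption)) hderiv hderiv_nonneg
  have := hmono (Set.left_mem_Icc.2 zero_le_one) ⟨ht0, ht1⟩ ht0
  norm_num [f] at this
  linarith

theorem two_add_mul_sq_le_one_add_rpow_add_one_sub_rpow {p t : ℝ} (hp1 : 1 ≤ p) (hp2 : p ≤ 2)
    (ht : |t| ≤ 1) : 2 + p * (p - 1) * t ^ 2 ≤ (1 + t) ^ p + (1 - t) ^ p := by
  wlog ht0 : 0 ≤ t generalizing t
  · have := this (t := -t) (by rwa [abs_neg]) (by linarith)
    rw [neg_sq, sub_neg_eq_add, ← sub_eq_add_neg] at this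
    linarith
  let f : ℝ → ℝ := fun t => (1 + t) ^ p + (1 - t) ^ p - p * (p - 1) * t ^ 2
  have hderiv : ∀ x ∈ Set.Ioo (0 : ℝ) 1,
      HasDerivAt f (p * ((1 + x) ^ (p - 1) - (1 - x) ^ (p - 1) - 2 * (p - 1) * x)) x := by
    intro x ⟨hx0, hx1⟩
    have h1 := ((hasDerivAt_id x).const_add 1).rpow_const (p := p) (Or.inl (by simp; linarith))
    have h2 := ((hasDerivAt_id x).const_sub 1).rpow_const (p := p) (Or.inl (by simp; linarith))
    refine ((h1.add h2).sub ((hasDerivAt_pow 2 x).const_mul (p * (p - 1)))).congr_deriv ?_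
    simp only [id]; ring
  have hderiv_nonneg : ∀ x ∈ Set.Ioo (0 : ℝ) 1,
      0 ≤ p * ((1 + x) ^ (p - 1) - (1 - x) ^ (p - 1) - 2 * (p - 1) * x) := by
    intro x ⟨hx0, hx1⟩
    have := two_mul_mul_le_one_add_rpow_sub_one_sub_rpow (q := p - 1) (by linarith) (by linarith)
      hx0.le hx1.le
    exact mul_nonneg (by linarith) (by linarith)
  have hmono := monotoneOn_Icc_of_hasDerivAt_nonneg (f := f)
    (by fun_prop (disch := linarith)) hderiv hderiv_nonneg
  have := hmono (Set.left_mem_Icc.2 zero_le_one) ⟨ht0, (abs_le.1 ht).2⟩ ht0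
  norm_num [f] at this
  linarith

theorem one_add_mul_sq_le_rpow_two_div {p t : ℝ} (hp1 : 1 ≤ p) (hp2 : p ≤ 2) (ht : |t| ≤ 1) :
    1 + (p - 1) * t ^ 2 ≤ (((1 + t) ^ p + (1 - t) ^ p) / 2) ^ (2 / p) := by
  have hp0 : 0 < p := by linarith
  have hs : 0 ≤ p * (p - 1) / 2 * t ^ 2 := by
    have : 0 ≤ p - 1 := by linarith
    positivity
  calc 1 + (p - 1) * t ^ 2 = 1 + 2 / p * (p * (p - 1) / 2 * t ^ 2) := by field_simp
    _ ≤ (1 + p * (p - 1) / 2 * t ^ 2) ^ (2 / p) :=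
      one_add_mul_self_le_rpow_one_add (by linarith) ((le_div_iff₀ hp0).2 (by linarith))
    _ ≤ _ := by
      gcongr
      linarith [two_add_mul_sq_le_one_add_rpow_add_one_sub_rpow hp1 hp2 ht]

theorem two_point_inequality {p : ℝ} (hp1 : 1 ≤ p) (hp2 : p ≤ 2) (a b : ℝ) :
    a ^ 2 + (p - 1) * b ^ 2 ≤ ((|a + b| ^ p + |a - b| ^ p) / 2) ^ (2 / p) := by
  wlog hba : |b| ≤ |a| generalizing a b
  · have hsq : a ^ 2 ≤ b ^ 2 := sq_le_sq.2 (le_of_not_ge hba)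
    calc a ^ 2 + (p - 1) * b ^ 2 ≤ b ^ 2 + (p - 1) * a ^ 2 := by nlinarith
      _ ≤ _ := this b a (le_of_not_ge hba)
      _ = _ := by rw [add_comm b a, abs_sub_comm]
  obtain ⟨t, ht, rfl⟩ : ∃ t, |t| ≤ 1 ∧ b = a * t := by
    rcases eq_or_ne a 0 with rfl | ha
    · exact ⟨0, by simp, by simpa using hba⟩
    · exact ⟨b / a, by rwa [abs_div, div_le_one (abs_pos.2 ha)], by field_simp⟩
  have h1 : 0 ≤ 1 + t := by linarith [(abs_le.1 ht).1]
  have h2 : 0 ≤ 1 - t := by linarith [(abs_le.1 ht).2]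
  have hsplit : (|a + a * t| ^ p + |a - a * t| ^ p) / 2 =
      |a| ^ p * (((1 + t) ^ p + (1 - t) ^ p) / 2) := by
    rw [← mul_one_add, ← mul_one_sub, abs_mul, abs_mul, abs_of_nonneg h1, abs_of_nonneg h2,
      Real.mul_rpow (abs_nonneg a) h1, Real.mul_rpow (abs_nonneg a) h2]
    ring
  rw [hsplit, Real.mul_rpow (by positivity) (by positivity), ← Real.rpow_mul (abs_nonneg a),
    mul_div_cancel₀ _ (by linarith : p ≠ 0), Real.rpow_two, sq_abs]
  nlinarith [one_add_mul_sq_le_rpow_two_div hp1 hp2 ht, sq_nonneg a]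

theorem two_point_inequality_rpow {p c : ℝ} (hp1 : 1 ≤ p) (hp2 : p ≤ 2) (hc : c ^ 2 = p - 1)
    (a b : ℝ) :
    (((a + b) / 2) ^ 2 + (c * ((a - b) / 2)) ^ 2) ^ (p / 2) ≤ (|a| ^ p + |b| ^ p) / 2 := by
  have h := two_point_inequality hp1 hp2 ((a + b) / 2) ((a - b) / 2)
  rw [show (a + b) / 2 + (a - b) / 2 = a by ring, show (a + b) / 2 - (a - b) / 2 = b by ring,
    ← hc, ← mul_pow] at h
  calc _ ≤ (((|a| ^ p + |b| ^ p) / 2) ^ (2 / p)) ^ (p / 2) :=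
        Real.rpow_le_rpow (by positivity) h (by positivity)
    _ = _ := by
      rw [← Real.rpow_mul (by positivity), div_mul_div_cancel₀ (by positivity),
        div_self two_ne_zero, Real.rpow_one]

theorem Real.Lp_pair_sum_le {ι : Type*} (t : Finset ι) (f g : ι → ℝ) {s : ℝ} (hs : 1 ≤ s) :
    (|∑ i ∈ t, f i| ^ s + |∑ i ∈ t, g i| ^ s) ^ s⁻¹ ≤
      ∑ i ∈ t, (|f i| ^ s + |g i| ^ s) ^ s⁻¹ := by
  have : Fact (1 ≤ ENNReal.ofReal s) := ⟨by simpa using ENNReal.ofReal_le_ofReal hs⟩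
  have hs' : (ENNReal.ofReal s).toReal = s := ENNReal.toReal_ofReal (by linarith)
  have norm_pair (a b : ℝ) :
      ‖WithLp.toLp (ENNReal.ofReal s) ![a, b]‖ = (|a| ^ s + |b| ^ s) ^ s⁻¹ := by
    rw [PiLp.norm_eq_sum (by rw [hs']; linarith), hs', one_div]
    simp [Fin.sum_univ_two]
  have sum_pair : ∑ i ∈ t, WithLp.toLp (ENNReal.ofReal s) ![f i, g i] =
      WithLp.toLp (ENNReal.ofReal s) ![∑ i ∈ t, f i, ∑ i ∈ t, g i] := by
    ext j; fin_cases j <;> simp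
  simpa only [sum_pair, norm_pair] using
    norm_sum_le t fun i => WithLp.toLp (ENNReal.ofReal s) ![f i, g i]

/-- Reverse Minkowski inequality, obtained from Minkowski's inequality in `ℓ^{1/r}` for the pairs
`(w i * u i ^ r, w i * v i ^ r)`. -/
theorem Real.rpow_sum_add_rpow_sum_le {ι : Type*} (t : Finset ι) {w u v : ι → ℝ}
    (hw : ∀ i ∈ t, 0 ≤ w i) (hu : ∀ i ∈ t, 0 ≤ u i) (hv : ∀ i ∈ t, 0 ≤ v i)
    {r : ℝ} (hr0 : 0 < r) (hr1 : r ≤ 1) :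
    (∑ i ∈ t, w i * u i ^ r) ^ r⁻¹ + (∑ i ∈ t, w i * v i ^ r) ^ r⁻¹ ≤
      (∑ i ∈ t, w i * (u i + v i) ^ r) ^ r⁻¹ := by
  have term (i) (hi : i ∈ t) : (|w i * u i ^ r| ^ r⁻¹ + |w i * v i ^ r| ^ r⁻¹) ^ r⁻¹⁻¹ =
      w i * (u i + v i) ^ r := by
    have hwi := hw i hi; have hui := hu i hi; have hvi := hv i hi
    rw [inv_inv, abs_of_nonneg (by positivity), abs_of_nonneg (by positivity),
      Real.mul_rpow hwi (by positivity), Real.mul_rpow hwi (by positivity),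
      Real.rpow_rpow_inv hui hr0.ne', Real.rpow_rpow_inv hvi hr0.ne', ← mul_add,
      Real.mul_rpow (by positivity) (by positivity), Real.rpow_inv_rpow hwi hr0.ne']
  have key := Real.Lp_pair_sum_le t (fun i => w i * u i ^ r) (fun i => w i * v i ^ r)
    (one_le_inv₀ hr0 |>.2 hr1)
  have hX : 0 ≤ ∑ i ∈ t, w i * u i ^ r := sum_nonneg fun i hi => by
    have := hw i hi; have := hu i hi; positivity
  have hY : 0 ≤ ∑ i ∈ t, w i * v i ^ r := sum_nonneg fun i hi => by
    have := hw i hi; have := hv i hi; positivity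
  rw [sum_congr rfl term, inv_inv, abs_of_nonneg hX, abs_of_nonneg hY] at key
  calc _ = ((_ ^ r⁻¹ + _ ^ r⁻¹) ^ r) ^ r⁻¹ := (Real.rpow_rpow_inv (by positivity) hr0.ne').symm
    _ ≤ _ := Real.rpow_le_rpow (by positivity) key (by positivity)

theorem Fin.sum_finset_succ {M : Type*} [AddCommMonoid M] {k : ℕ}
    (g : Finset (Fin (k + 1)) → M) :
    ∑ S, g S = ∑ S : Finset (Fin k),
      (g (S.map (Fin.succEmb k)) + g (insert 0 (S.map (Fin.succEmb k)))) := by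
  have huniv : (univ : Finset (Fin (k + 1))) = insert 0 (univ.image Fin.succ) := by
    rw [Fin.univ_succ, cons_eq_insert, map_eq_image]; rfl
  rw [← powerset_univ, huniv, sum_powerset_insert (by simp), powerset_image,
    sum_image fun _ _ _ _ h => image_injective (Fin.succ_injective k) h,
    sum_image fun _ _ _ _ h => image_injective (Fin.succ_injective k) h, powerset_univ,
    ← sum_add_distrib]
  simp [map_eq_image]

theorem Fin.sum_cons_bool {M : Type*} [AddCommMonoid M] {k : ℕ}
    (g : (Fin (k + 1) → Bool) → M) :
    ∑ y, g y = ∑ x : Fin k → Bool, (g (Fin.cons false x) + g (Fin.cons true x)) := by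
  rw [← (Fin.consEquiv fun _ => Bool).sum_comp, Fintype.sum_prod_type, Fintype.sum_bool,
    add_comm, ← sum_add_distrib]
  rfl

namespace BooleanCube

variable {k : ℕ}

noncomputable def mean (g : (Fin k → Bool) → ℝ) : ℝ := ((2 : ℝ) ^ k)⁻¹ * ∑ x, g x

noncomputable def walshCoeff (f : (Fin k → Bool) → ℝ) (S : Finset (Fin k)) : ℝ :=
  mean fun x => f x * Walsh S x

/-- `‖N_η f‖₂²` for the noise operator `N_η f = ∑_S f̂(S) η^{|S|} W_S`. -/
noncomputable def noiseNormSq (η : ℝ) (f : (Fin k → Bool) → ℝ) : ℝ :=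
  ∑ S, walshCoeff f S ^ 2 * η ^ (2 * S.card)

theorem mean_mono {g h : (Fin k → Bool) → ℝ} (hgh : ∀ x, g x ≤ h x) : mean g ≤ mean h :=
  mul_le_mul_of_nonneg_left (sum_le_sum fun x _ => hgh x) (by positivity)

theorem mean_nonneg {g : (Fin k → Bool) → ℝ} (hg : ∀ x, 0 ≤ g x) : 0 ≤ mean g :=
  mul_nonneg (by positivity) (sum_nonneg fun x _ => hg x)

theorem mean_succ (g : (Fin (k + 1) → Bool) → ℝ) :
    mean g = mean fun x => (g (Fin.cons false x) + g (Fin.cons true x)) / 2 := by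
  simp only [mean, Fin.sum_cons_bool, ← sum_div, pow_succ]
  field_simp

theorem walsh_map_succ_cons (S : Finset (Fin k)) (b : Bool) (x : Fin k → Bool) :
    Walsh (S.map (Fin.succEmb k)) (Fin.cons b x) = Walsh S x := by
  simp [Walsh]

theorem walsh_insert_zero_cons (S : Finset (Fin k)) (b : Bool) (x : Fin k → Bool) :
    Walsh (insert 0 (S.map (Fin.succEmb k))) (Fin.cons b x) =
      (if b then -1 else 1) * Walsh S x := by
  rw [Walsh, prod_insert (by simp), ← Walsh, walsh_map_succ_cons, Fin.cons_zero]

theorem walshCoeff_map_succ (f : (Fin (k + 1) → Bool) → ℝ) (S : Finset (Fin k)) :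
    walshCoeff f (S.map (Fin.succEmb k)) =
      walshCoeff (fun x => (f (Fin.cons false x) + f (Fin.cons true x)) / 2) S := by
  simp only [walshCoeff, mean_succ (fun x => f x * Walsh _ x), walsh_map_succ_cons]
  congr 1; funext x; ring

theorem walshCoeff_insert_zero (f : (Fin (k + 1) → Bool) → ℝ) (S : Finset (Fin k)) :
    walshCoeff f (insert 0 (S.map (Fin.succEmb k))) =
      walshCoeff (fun x => (f (Fin.cons false x) - f (Fin.cons true x)) / 2) S := by
  simp only [walshCoeff, mean_succ (fun x => f x * Walsh _ x), walsh_insert_zero_cons]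
  congr 1; funext x; simp only [Bool.false_eq_true, if_false, if_true]; ring

theorem walshCoeff_const_mul (c : ℝ) (f : (Fin k → Bool) → ℝ) (S : Finset (Fin k)) :
    walshCoeff (fun x => c * f x) S = c * walshCoeff f S := by
  simp only [walshCoeff, mean, mul_sum]
  congr 1; funext x; ring

theorem walshCoeff_indicator (T : Finset (Fin k → Bool)) (S : Finset (Fin k)) :
    walshCoeff (fun x => if x ∈ T then 1 else 0) S = ((2 : ℝ) ^ k)⁻¹ * ∑ x ∈ T, Walsh S x := by
  simp only [walshCoeff, mean, ite_mul, one_mul, zero_mul, sum_ite_mem, univ_inter]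

theorem mean_abs_indicator_rpow {p : ℝ} (hp : p ≠ 0) (T : Finset (Fin k → Bool)) :
    (mean fun x => |if x ∈ T then (1 : ℝ) else 0| ^ p) = T.card / 2 ^ k := by
  have hpt (x) : |if x ∈ T then (1 : ℝ) else 0| ^ p = if x ∈ T then 1 else 0 := by
    split_ifs <;> simp [Real.zero_rpow hp]
  simp only [mean, hpt, sum_ite_mem, univ_inter, sum_const, nsmul_eq_mul, mul_one,
    inv_mul_eq_div]

theorem noiseNormSq_succ (η : ℝ) (f : (Fin (k + 1) → Bool) → ℝ) :
    noiseNormSq η f =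
      noiseNormSq η (fun x => (f (Fin.cons false x) + f (Fin.cons true x)) / 2) +
      noiseNormSq η (fun x => η * ((f (Fin.cons false x) - f (Fin.cons true x)) / 2)) := by
  rw [noiseNormSq, Fin.sum_finset_succ, sum_add_distrib]
  congr 1 <;> refine sum_congr rfl fun S _ => ?_
  · rw [walshCoeff_map_succ, card_map]
  · rw [walshCoeff_insert_zero, walshCoeff_const_mul, card_insert_of_notMem (by simp), card_map]
    ring

theorem mean_rpow_add_mean_rpow_le {p : ℝ} (hp0 : 0 < p) (hp2 : p ≤ 2)
    (g h : (Fin k → Bool) → ℝ) :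
    (mean fun x => |g x| ^ p) ^ (2 / p) + (mean fun x => |h x| ^ p) ^ (2 / p) ≤
      (mean fun x => (g x ^ 2 + h x ^ 2) ^ (p / 2)) ^ (2 / p) := by
  have hsq (a : ℝ) : (a ^ 2) ^ (p / 2) = |a| ^ p := by
    rw [← sq_abs, ← Real.rpow_two, ← Real.rpow_mul (abs_nonneg a), mul_div_cancel₀ _ two_ne_zero]
  have := Real.rpow_sum_add_rpow_sum_le univ (w := fun _ => ((2 : ℝ) ^ k)⁻¹)
    (u := fun x => g x ^ 2) (v := fun x => h x ^ 2) (fun _ _ => by positivity)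
    (fun _ _ => sq_nonneg _) (fun _ _ => sq_nonneg _) (half_pos hp0) (by linarith)
  simpa only [mean, mul_sum, hsq, inv_div] using this

theorem noiseNormSq_le {η : ℝ} (hη0 : 0 ≤ η) (hη1 : η ≤ 1) (f : (Fin k → Bool) → ℝ) :
    noiseNormSq η f ≤ (mean fun x => |f x| ^ (1 + η ^ 2)) ^ (2 / (1 + η ^ 2)) := by
  set p := 1 + η ^ 2
  have hp1 : 1 ≤ p := by nlinarith
  have hp2 : p ≤ 2 := by nlinarith
  induction k with
  | zero =>
    have hS : (default : Finset (Fin 0)) = ∅ := Subsingleton.elim _ _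
    simp only [noiseNormSq, walshCoeff, mean, Walsh, Fintype.sum_unique, hS, prod_empty,
      card_empty, mul_zero, pow_zero, inv_one, one_mul, mul_one]
    rw [← Real.rpow_mul (abs_nonneg _), mul_div_cancel₀ _ (by positivity), Real.rpow_two, sq_abs]
  | succ k ih =>
    set f₀ := fun x => f (Fin.cons false x)
    set f₁ := fun x => f (Fin.cons true x)
    calc noiseNormSq η f
        ≤ (mean fun x => |(f₀ x + f₁ x) / 2| ^ p) ^ (2 / p) +
            (mean fun x => |η * ((f₀ x - f₁ x) / 2)| ^ p) ^ (2 / p) := by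
          rw [noiseNormSq_succ]; exact add_le_add (ih _) (ih _)
      _ ≤ (mean fun x => (((f₀ x + f₁ x) / 2) ^ 2 + (η * ((f₀ x - f₁ x) / 2)) ^ 2) ^ (p / 2))
            ^ (2 / p) := mean_rpow_add_mean_rpow_le (by positivity) hp2 _ _
      _ ≤ (mean fun x => (|f₀ x| ^ p + |f₁ x| ^ p) / 2) ^ (2 / p) :=
          Real.rpow_le_rpow (mean_nonneg fun x => by positivity)
            (mean_mono fun x => two_point_inequality_rpow hp1 hp2 (by ring) (f₀ x) (f₁ x))
            (by positivity)
      _ = (mean fun x => |f x| ^ p) ^ (2 / p) := by rw [mean_succ]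

end BooleanCube

/-- Hypercontractivity consequence of the Bonami–Beckner inequality:
`∑_S f̂(S)² η^{2|S|} ≤ ‖f‖²_{1+η²}`, and for the indicator of a set `T` of
density `δ`, `∑_S 1̂_T(S)² η^{2|S|} ≤ δ^{2/(1+η²)}`. -/
theorem stmt18 {k : ℕ} (η : ℝ) (hη0 : 0 ≤ η) (hη1 : η ≤ 1)
    (f : (Fin k → Bool) → ℝ) (fhat : Finset (Fin k) → ℝ)
    (hfhat : ∀ S, fhat S = ((2 : ℝ) ^ k)⁻¹ * ∑ x, f x * Walsh S x)
    (T : Finset (Fin k → Bool)) (That : Finset (Fin k) → ℝ)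
    (hThat : ∀ S, That S = ((2 : ℝ) ^ k)⁻¹ * ∑ x ∈ T, Walsh S x) :
    (∑ S : Finset (Fin k), (fhat S) ^ 2 * η ^ (2 * S.card)) ≤
      (((2 : ℝ) ^ k)⁻¹ * ∑ x, |f x| ^ ((1 : ℝ) + η ^ 2))
        ^ ((2 : ℝ) / (1 + η ^ 2)) ∧
    (∑ S : Finset (Fin k), (That S) ^ 2 * η ^ (2 * S.card)) ≤
      ((T.card : ℝ) / 2 ^ k) ^ ((2 : ℝ) / (1 + η ^ 2)) := by
  open BooleanCube in
  obtain rfl : fhat = walshCoeff f := funext hfhat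
  obtain rfl : That = walshCoeff fun x => if x ∈ T then 1 else 0 :=
    funext fun S => (hThat S).trans (walshCoeff_indicator T S).symm
  have hT := noiseNormSq_le hη0 hη1 fun x => if x ∈ T then 1 else 0
  rw [mean_abs_indicator_rpow (by positivity)] at hT
  exact ⟨noiseNormSq_le hη0 hη1 f, hT⟩
end

section
/- (Small sets in the bipartite noisy hypercube have large conductance) Fix k ≥ 1 and 1 ≤ c ≤ 10k/22, and let ε = 1/log_{2.2}(k/c). In the odd-distance ε-noisy hypercube G^{(o)} on V = {0,1}^k (edge xy of weight ε^{‖x-y‖_1} iff ‖x-y‖_1 odd), every vertex set T with |T| ≤ (c/k)|V| has conductance φ(T) = w(T, V∖T)/w(T,V) ≥ 1/2. -/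
open BigOperators Classical

namespace Stmt19Aux

variable {k : ℕ}

noncomputable def kern (ε : ℝ) (x y : Fin k → Bool) : ℝ :=
  if Odd (hammingDist x y) then ε ^ hammingDist x y else 0

noncomputable def mu (k : ℕ) (ε : ℝ) (S : Finset (Fin k)) : ℝ :=
  ((1 - ε) ^ S.card * (1 + ε) ^ (k - S.card)
    - (1 + ε) ^ S.card * (1 - ε) ^ (k - S.card)) / 2

lemma walsh_prod_form (S : Finset (Fin k)) (x : Fin k → Bool) :
    Walsh S x = ∏ i, (if i ∈ S then (if x i then (-1:ℝ) else 1) else 1) := by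
  rw [Finset.prod_ite_mem, Finset.univ_inter, Walsh]

lemma pow_hamming (t : ℝ) (x y : Fin k → Bool) :
    t ^ hammingDist x y = ∏ i, (if x i ≠ y i then t else 1) := by
  rw [← Finset.prod_filter, Finset.prod_const]
  rfl

lemma key_sum (t : ℝ) (S : Finset (Fin k)) (x : Fin k → Bool) :
    ∑ y, t ^ hammingDist x y * (Walsh S x * Walsh S y)
      = (1 - t) ^ S.card * (1 + t) ^ (k - S.card) := by
  have h1 : ∀ y : Fin k → Bool, t ^ hammingDist x y * (Walsh S x * Walsh S y)
      = ∏ i, ((if x i ≠ y i then t else 1) *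
          ((if i ∈ S then (if x i then (-1:ℝ) else 1) else 1) *
           (if i ∈ S then (if y i then (-1:ℝ) else 1) else 1))) := by
    intro y
    rw [pow_hamming, walsh_prod_form, walsh_prod_form, ← Finset.prod_mul_distrib,
      ← Finset.prod_mul_distrib]
  simp only [h1]
  have h2 : ∑ y : Fin k → Bool, ∏ i, ((if x i ≠ y i then t else 1) *
          ((if i ∈ S then (if x i then (-1:ℝ) else 1) else 1) *
           (if i ∈ S then (if y i then (-1:ℝ) else 1) else 1)))
      = ∏ i, ∑ b : Bool, ((if x i ≠ b then t else 1) *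
          ((if i ∈ S then (if x i then (-1:ℝ) else 1) else 1) *
           (if i ∈ S then (if b then (-1:ℝ) else 1) else 1))) := by
    rw [Finset.prod_univ_sum, Fintype.piFinset_univ]
  rw [h2]
  have h3 : ∀ i : Fin k, (∑ b : Bool, ((if x i ≠ b then t else 1) *
          ((if i ∈ S then (if x i then (-1:ℝ) else 1) else 1) *
           (if i ∈ S then (if b then (-1:ℝ) else 1) else 1))))
      = if i ∈ S then 1 - t else 1 + t := by
    intro i
    rw [Fintype.sum_bool]
    by_cases hS : i ∈ S <;> cases hx : x i <;> simp [hS, hx] <;> ring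
  rw [Finset.prod_congr rfl (fun i _ => h3 i), Finset.prod_ite, Finset.prod_const,
    Finset.prod_const, Finset.filter_mem_eq_inter, Finset.univ_inter]
  have hcompl : Finset.filter (fun i => i ∉ S) Finset.univ = Sᶜ := by
    ext i; simp
  rw [hcompl, Finset.card_compl, Fintype.card_fin]

lemma walsh_mul_self (S : Finset (Fin k)) (x : Fin k → Bool) :
    Walsh S x * Walsh S x = 1 := by
  rw [Walsh, ← Finset.prod_mul_distrib, Finset.prod_eq_one]
  intro i _
  cases hx : x i <;> simp [hx]

lemma walsh_orth (x y : Fin k → Bool) :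
    ∑ S : Finset (Fin k), Walsh S x * Walsh S y
      = if x = y then (2:ℝ)^k else 0 := by
  have h1 : ∀ S : Finset (Fin k), Walsh S x * Walsh S y
      = ∏ i ∈ S, ((if x i then (-1:ℝ) else 1) * (if y i then (-1:ℝ) else 1)) := by
    intro S; rw [Walsh, Walsh, ← Finset.prod_mul_distrib]
  simp only [h1]
  have h2 : ∏ i : Fin k, (((if x i then (-1:ℝ) else 1) * (if y i then (-1:ℝ) else 1)) + 1)
      = ∑ S ∈ (Finset.univ : Finset (Fin k)).powerset,
          (∏ i ∈ S, ((if x i then (-1:ℝ) else 1) * (if y i then (-1:ℝ) else 1))) *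
            ∏ i ∈ Finset.univ \ S, (1:ℝ) := Finset.prod_add _ _ _
  simp only [Finset.prod_const_one, mul_one, Finset.powerset_univ] at h2
  rw [← h2]
  by_cases hxy : x = y
  · subst hxy
    simp only [if_pos rfl]
    rw [Finset.prod_congr rfl (g := fun _ => (2:ℝ))
      (fun i _ => by cases hx : x i <;> simp [hx] <;> norm_num)]
    simp
  · rw [if_neg hxy]
    obtain ⟨i, hi⟩ : ∃ i, x i ≠ y i := by
      by_contra h
      push_neg at h
      exact hxy (funext h)
    apply Finset.prod_eq_zero (Finset.mem_univ i)
    cases hx : x i <;> cases hy : y i <;> simp [hx, hy] at hi ⊢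

lemma kern_eq (ε : ℝ) (x y : Fin k → Bool) :
    kern ε x y = (ε ^ hammingDist x y - (-ε) ^ hammingDist x y) / 2 := by
  rw [kern]
  by_cases h : Odd (hammingDist x y)
  · rw [if_pos h, h.neg_pow]; ring
  · rw [if_neg h, (Nat.not_odd_iff_even.mp h).neg_pow]; ring

lemma eig (ε : ℝ) (S : Finset (Fin k)) (x : Fin k → Bool) :
    ∑ y, kern ε x y * (Walsh S x * Walsh S y) = mu k ε S := by
  have h : ∀ y : Fin k → Bool, kern ε x y * (Walsh S x * Walsh S y)
      = (ε ^ hammingDist x y * (Walsh S x * Walsh S y)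
        - (-ε) ^ hammingDist x y * (Walsh S x * Walsh S y)) / 2 := by
    intro y; rw [kern_eq]; ring
  simp only [h]
  rw [← Finset.sum_div, Finset.sum_sub_distrib, key_sum, key_sum, mu]
  ring_nf

lemma kern_expand (ε : ℝ) (x y : Fin k → Bool) :
    kern ε x y = ((2:ℝ)^k)⁻¹ * ∑ S : Finset (Fin k), mu k ε S * (Walsh S x * Walsh S y) := by
  have h1 : ∀ S : Finset (Fin k), mu k ε S * (Walsh S x * Walsh S y)
      = ∑ z, kern ε x z * (Walsh S z * Walsh S y) := by
    intro S
    rw [← eig ε S x, Finset.sum_mul]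
    apply Finset.sum_congr rfl
    intro z _
    linear_combination (kern ε x z * Walsh S z * Walsh S y) * (walsh_mul_self S x)
  simp only [h1]
  rw [Finset.sum_comm]
  have h2 : ∀ z : Fin k → Bool, ∑ S : Finset (Fin k), kern ε x z * (Walsh S z * Walsh S y)
      = kern ε x z * (if z = y then (2:ℝ)^k else 0) := by
    intro z; rw [← Finset.mul_sum, walsh_orth]
  simp only [h2, mul_ite, mul_zero]
  rw [Finset.sum_ite_eq' Finset.univ y (fun z => kern ε x z * (2:ℝ)^k)]
  simp only [Finset.mem_univ, if_pos]
  rw [mul_comm (kern ε x y), ← mul_assoc, inv_mul_cancel₀ (by positivity), one_mul]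

end Stmt19Aux

open Stmt19Aux

/-- Small sets in the bipartite noisy hypercube have large conductance: with
`1 ≤ c ≤ 10k/22` and `ε = 1/log_{2.2}(k/c)`, in the odd-distance `ε`-noisy
hypercube every nonempty `T` with `|T| ≤ (c/k)·2^k` has conductance
`φ(T) = w(T, V∖T)/w(T,V) ≥ 1/2`. (As in the paper, we may assume the normalized
eigenvalue bound and the Bonami–Beckner inequality with `η = √((1-ε)/(1+ε))`.) -/
theorem stmt19 (k : ℕ) (hk : 1 ≤ k) (c : ℝ) (hc1 : 1 ≤ c)
    (hc2 : c ≤ 10 * k / 22)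
    (ε : ℝ) (hε : ε = Real.log 2.2 / Real.log (k / c))
    (hρbound : ∀ S : Finset (Fin k),
      (((1 + ε) ^ (k - S.card) * (1 - ε) ^ S.card
          - (1 - ε) ^ (k - S.card) * (1 + ε) ^ S.card) / 2) /
        (((1 + ε) ^ k - (1 - ε) ^ k) / 2)
      ≤ 11 / 10 * ((1 - ε) / (1 + ε)) ^ S.card)
    (hBB : ∀ f : (Fin k → Bool) → ℝ,
      (∑ S : Finset (Fin k),
          (((2 : ℝ) ^ k)⁻¹ * ∑ x, f x * Walsh S x) ^ 2
            * ((1 - ε) / (1 + ε)) ^ S.card) ≤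
        (((2 : ℝ) ^ k)⁻¹ * ∑ x, |f x| ^ ((1 : ℝ) + (1 - ε) / (1 + ε)))
          ^ ((2 : ℝ) / (1 + (1 - ε) / (1 + ε))))
    (T : Finset (Fin k → Bool)) (hT : T.Nonempty)
    (hTcard : (T.card : ℝ) ≤ c / k * 2 ^ k) :
    1 / 2 ≤
      (∑ x ∈ T, ∑ y ∈ Tᶜ.filter (fun y => Odd (hammingDist x y)),
        ε ^ hammingDist x y) /
      (∑ x ∈ T, ∑ y ∈ Finset.univ.filter (fun y => Odd (hammingDist x y)),
        ε ^ hammingDist x y) := by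
  -- basic positivity facts
  have hc0 : (0:ℝ) < c := lt_of_lt_of_le one_pos hc1
  have hk0 : (0:ℝ) < (k:ℝ) := by
    have : (1:ℝ) ≤ (k:ℝ) := by exact_mod_cast hk
    linarith
  have hkc : (2.2:ℝ) ≤ (k:ℝ)/c := by
    rw [le_div_iff₀ hc0]
    norm_num at hc2 ⊢
    linarith
  have hlog22 : (0:ℝ) < Real.log 2.2 := Real.log_pos (by norm_num)
  have hlogkc : Real.log 2.2 ≤ Real.log ((k:ℝ)/c) :=
    Real.log_le_log (by norm_num) hkc
  have hlogkc0 : (0:ℝ) < Real.log ((k:ℝ)/c) := lt_of_lt_of_le hlog22 hlogkc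
  have hε0 : 0 < ε := by rw [hε]; positivity
  have hε1 : ε ≤ 1 := by
    rw [hε, div_le_one hlogkc0]; exact hlogkc
  have h1ε : (0:ℝ) < 1 + ε := by linarith
  set η2 : ℝ := (1 - ε) / (1 + ε) with hη2
  have hη20 : 0 ≤ η2 := div_nonneg (by linarith) (le_of_lt h1ε)
  -- mu ∅ > 0
  have hmu0 : mu k ε ∅ = ((1+ε)^k - (1-ε)^k)/2 := by
    rw [mu]; simp
  have hmu0pos : 0 < mu k ε ∅ := by
    rw [hmu0]
    have habs : |1 - ε| < 1 + ε := by
      rw [abs_lt]; constructor <;> linarith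
    have h1 : (1-ε)^k ≤ |1-ε|^k := by
      calc (1-ε)^k ≤ |(1-ε)^k| := le_abs_self _
      _ = |1-ε|^k := by rw [abs_pow]
    have h2 : |1-ε|^k < (1+ε)^k :=
      pow_lt_pow_left₀ habs (abs_nonneg _) (by omega)
    linarith
  -- rewrite goal sums in terms of kern
  have hfilter : ∀ (s : Finset (Fin k → Bool)) (x : Fin k → Bool),
      (∑ y ∈ s.filter (fun y => Odd (hammingDist x y)), ε ^ hammingDist x y)
        = ∑ y ∈ s, kern ε x y := by
    intro s x
    rw [Finset.sum_filter]
    rfl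
  simp only [hfilter]
  -- total and inner
  have total_eq : ∑ x ∈ T, ∑ y, kern ε x y = (T.card : ℝ) * mu k ε ∅ := by
    have hx : ∀ x : Fin k → Bool, ∑ y, kern ε x y = mu k ε ∅ := by
      intro x
      have := eig (k := k) ε ∅ x
      simp only [Walsh, Finset.prod_empty, mul_one] at this
      exact this
    rw [Finset.sum_congr rfl (fun x _ => hx x), Finset.sum_const, nsmul_eq_mul]
  set W : Finset (Fin k) → ℝ := fun S => ∑ x ∈ T, Walsh S x with hW
  have inner_eq : ∑ x ∈ T, ∑ y ∈ T, kern ε x y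
      = ((2:ℝ)^k)⁻¹ * ∑ S : Finset (Fin k), mu k ε S * (W S)^2 := by
    have e1 : ∀ S : Finset (Fin k), mu k ε S * (W S)^2
        = ∑ x ∈ T, ∑ y ∈ T, mu k ε S * (Walsh S x * Walsh S y) := by
      intro S
      rw [hW, sq, Finset.sum_mul_sum]
      simp only [Finset.mul_sum]
    simp only [e1]
    have e3 : ∑ S : Finset (Fin k), ∑ x ∈ T, ∑ y ∈ T, mu k ε S * (Walsh S x * Walsh S y)
        = ∑ x ∈ T, ∑ y ∈ T, ∑ S : Finset (Fin k), mu k ε S * (Walsh S x * Walsh S y) := by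
      rw [Finset.sum_comm]
      exact Finset.sum_congr rfl fun x _ => Finset.sum_comm
    rw [e3]
    simp only [Finset.mul_sum]
    exact Finset.sum_congr rfl fun x _ => Finset.sum_congr rfl fun y _ => by
      rw [← Finset.mul_sum]; exact kern_expand ε x y
  -- eigenvalue bound in terms of mu
  have hρ' : ∀ S : Finset (Fin k), mu k ε S ≤ 11/10 * η2 ^ S.card * mu k ε ∅ := by
    intro S
    have hnum : mu k ε S = ((1 + ε) ^ (k - S.card) * (1 - ε) ^ S.card
        - (1 - ε) ^ (k - S.card) * (1 + ε) ^ S.card) / 2 := by rw [mu]; ring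
    have h := hρbound S
    rw [← hnum, ← hmu0] at h
    calc mu k ε S = (mu k ε S / mu k ε ∅) * mu k ε ∅ := by
          field_simp
      _ ≤ (11/10 * η2 ^ S.card) * mu k ε ∅ :=
          mul_le_mul_of_nonneg_right h (le_of_lt hmu0pos)
  -- Bonami-Beckner applied to the indicator of T
  have h2k : (0:ℝ) < (2:ℝ)^k := by positivity
  set α : ℝ := ((2:ℝ)^k)⁻¹ * T.card with hα
  have hα0 : 0 < α := by
    have : (0:ℝ) < T.card := by exact_mod_cast Finset.card_pos.mpr hT
    positivity
  have hBB' : (∑ S : Finset (Fin k), (((2:ℝ)^k)⁻¹ * W S)^2 * η2 ^ S.card)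
      ≤ α ^ ((1:ℝ) + ε) := by
    have hf := hBB (fun x => if x ∈ T then (1:ℝ) else 0)
    have hf1 : ∀ S : Finset (Fin k),
        (∑ x, (if x ∈ T then (1:ℝ) else 0) * Walsh S x) = W S := by
      intro S
      simp only [ite_mul, one_mul, zero_mul]
      rw [Finset.sum_ite_mem, Finset.univ_inter, hW]
    have hp0 : (0:ℝ) < 1 + η2 := by linarith
    have hf2 : (∑ x, |if x ∈ T then (1:ℝ) else 0| ^ ((1:ℝ) + η2)) = (T.card : ℝ) := by
      have : ∀ x : Fin k → Bool, |if x ∈ T then (1:ℝ) else 0| ^ ((1:ℝ) + η2)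
          = if x ∈ T then (1:ℝ) else 0 := by
        intro x
        by_cases hx : x ∈ T
        · simp [hx, Real.one_rpow]
        · simp [hx, Real.zero_rpow (ne_of_gt hp0)]
      simp only [this]
      rw [Finset.sum_ite_mem, Finset.univ_inter, Finset.sum_const, nsmul_eq_mul, mul_one]
    have hpe : (2:ℝ) / (1 + η2) = 1 + ε := by
      rw [hη2]
      field_simp
      ring
    rw [hpe] at hf
    simp only [hf1, hf2] at hf
    exact hf
  -- bound the quadratic form
  have hS3 : (∑ S : Finset (Fin k), η2 ^ S.card * (W S)^2)
      ≤ ((2:ℝ)^k)^2 * α ^ ((1:ℝ) + ε) := by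
    have e : ∀ S : Finset (Fin k), η2 ^ S.card * (W S)^2
        = ((2:ℝ)^k)^2 * ((((2:ℝ)^k)⁻¹ * W S)^2 * η2 ^ S.card) := by
      intro S
      field_simp
    calc (∑ S : Finset (Fin k), η2 ^ S.card * (W S)^2)
        = ((2:ℝ)^k)^2 * ∑ S : Finset (Fin k), (((2:ℝ)^k)⁻¹ * W S)^2 * η2 ^ S.card := by
          rw [Finset.mul_sum]
          exact Finset.sum_congr rfl fun S _ => e S
      _ ≤ ((2:ℝ)^k)^2 * α ^ ((1:ℝ) + ε) :=
          mul_le_mul_of_nonneg_left hBB' (by positivity)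
  have hinner_le : ∑ x ∈ T, ∑ y ∈ T, kern ε x y
      ≤ 11/10 * mu k ε ∅ * (2:ℝ)^k * α ^ ((1:ℝ) + ε) := by
    rw [inner_eq]
    have step1 : (∑ S : Finset (Fin k), mu k ε S * (W S)^2)
        ≤ 11/10 * mu k ε ∅ * ∑ S : Finset (Fin k), η2 ^ S.card * (W S)^2 := by
      rw [Finset.mul_sum]
      apply Finset.sum_le_sum
      intro S _
      calc mu k ε S * (W S)^2 ≤ (11/10 * η2 ^ S.card * mu k ε ∅) * (W S)^2 :=
            mul_le_mul_of_nonneg_right (hρ' S) (sq_nonneg _)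
        _ = 11/10 * mu k ε ∅ * (η2 ^ S.card * (W S)^2) := by ring
    calc ((2:ℝ)^k)⁻¹ * ∑ S : Finset (Fin k), mu k ε S * (W S)^2
        ≤ ((2:ℝ)^k)⁻¹ * (11/10 * mu k ε ∅ * ∑ S : Finset (Fin k), η2 ^ S.card * (W S)^2) :=
          mul_le_mul_of_nonneg_left step1 (by positivity)
      _ ≤ ((2:ℝ)^k)⁻¹ * (11/10 * mu k ε ∅ * (((2:ℝ)^k)^2 * α ^ ((1:ℝ) + ε))) := by
          apply mul_le_mul_of_nonneg_left _ (by positivity)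
          apply mul_le_mul_of_nonneg_left hS3
          positivity
      _ = 11/10 * mu k ε ∅ * (2:ℝ)^k * α ^ ((1:ℝ) + ε) := by
          field_simp
  -- the scalar estimate : 11/10 * α^(1+ε) ≤ α/2
  have hαck : α ≤ c / (k:ℝ) := by
    rw [hα, inv_mul_le_iff₀ h2k, mul_comm]
    exact hTcard
  have hck : (c/(k:ℝ)) ^ ε = 5/11 := by
    have hck0 : (0:ℝ) < c/(k:ℝ) := by positivity
    rw [Real.rpow_def_of_pos hck0]
    have hlogck : Real.log (c/(k:ℝ)) = -Real.log ((k:ℝ)/c) := by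
      rw [Real.log_div (ne_of_gt hc0) (ne_of_gt hk0), Real.log_div (ne_of_gt hk0) (ne_of_gt hc0)]
      ring
    have hεlog : Real.log (c/(k:ℝ)) * ε = -Real.log 2.2 := by
      rw [hlogck, hε]
      field_simp
    rw [hεlog, Real.exp_neg, Real.exp_log (by norm_num : (0:ℝ) < 2.2)]
    norm_num
  have hαε : α ^ ε ≤ 5/11 := by
    calc α ^ ε ≤ (c/(k:ℝ)) ^ ε := Real.rpow_le_rpow hα0.le hαck hε0.le
      _ = 5/11 := hck
  have hkey : 11/10 * α ^ ((1:ℝ) + ε) ≤ α / 2 := by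
    have hsplitpow : α ^ ((1:ℝ) + ε) = α * α ^ ε := by
      rw [Real.rpow_add hα0, Real.rpow_one]
    rw [hsplitpow]
    calc 11/10 * (α * α ^ ε) = 11/10 * α * α ^ ε := by ring
      _ ≤ 11/10 * α * (5/11) := by
          apply mul_le_mul_of_nonneg_left hαε
          positivity
      _ = α / 2 := by ring
  have hTα : (T.card : ℝ) = (2:ℝ)^k * α := by
    rw [hα]
    field_simp
  have hinner_half : ∑ x ∈ T, ∑ y ∈ T, kern ε x y
      ≤ (∑ x ∈ T, ∑ y, kern ε x y) / 2 := by
    rw [total_eq, hTα]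
    calc ∑ x ∈ T, ∑ y ∈ T, kern ε x y
        ≤ 11/10 * mu k ε ∅ * (2:ℝ)^k * α ^ ((1:ℝ) + ε) := hinner_le
      _ = mu k ε ∅ * (2:ℝ)^k * (11/10 * α ^ ((1:ℝ) + ε)) := by ring
      _ ≤ mu k ε ∅ * (2:ℝ)^k * (α / 2) := by
          apply mul_le_mul_of_nonneg_left hkey
          positivity
      _ = (2:ℝ)^k * α * mu k ε ∅ / 2 := by ring
  have hsplit : ∑ x ∈ T, ∑ y ∈ Tᶜ, kern ε x y
      = (∑ x ∈ T, ∑ y, kern ε x y) - ∑ x ∈ T, ∑ y ∈ T, kern ε x y := by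
    have h : ∀ x ∈ T, (∑ y ∈ Tᶜ, kern ε x y)
        = (∑ y, kern ε x y) - ∑ y ∈ T, kern ε x y := by
      intro x _
      rw [← Finset.sum_add_sum_compl T (kern ε x)]
      ring
    rw [Finset.sum_congr rfl h, Finset.sum_sub_distrib]
  have htotpos : 0 < ∑ x ∈ T, ∑ y, kern ε x y := by
    rw [total_eq]
    apply mul_pos _ hmu0pos
    exact_mod_cast Finset.card_pos.mpr hT
  rw [le_div_iff₀ htotpos, hsplit]
  linarith
end
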